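/- arXiv:2007.04617 — 2 statements merged into one kernel-verified Lean document; each statement's English description precedes it below -/
import Mathlib

section
/- With the setup of the masked stochastic gradient (mask probabilities p for A and q for b, uniform selection of the pair (I,J) among st partition pairs), the following identity holds for every fixed x ∈ ℝ^n: E[ ‖Â x / p² − b̂ / (pq)‖₂² ] = (1/p²)‖A x − b‖₂² + ((1−q)/(p² q))‖b‖₂² + ((1−p)/p³) x^T diag(A^T A) x. -/
open Matrix BigOperators Finset Filter

noncomputable section

/-- Entrywise Bernoulli mask of a matrix. -/
def maskM {m n : ℕ} (δ : Fin m → Fin n → Bool) (A : Matrix (Fin m) (Fin n) ℝ) :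
    Matrix (Fin m) (Fin n) ℝ := Matrix.of fun i j => if δ i j then A i j else 0

/-- Entrywise Bernoulli mask of a vector. -/
def maskV {m : ℕ} (ε : Fin m → Bool) (b : Fin m → ℝ) : Fin m → ℝ :=
  fun i => if ε i then b i else 0

/-- Probability of a given mask realization: i.i.d. Bernoulli(p) entries. -/
def wM {m n : ℕ} (p : ℝ) (δ : Fin m → Fin n → Bool) : ℝ :=
  ∏ i, ∏ j, (if δ i j then p else 1 - p)

/-- Probability of a given vector-mask realization: i.i.d. Bernoulli(q) entries. -/
def wV {m : ℕ} (q : ℝ) (ε : Fin m → Bool) : ℝ :=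
  ∏ i, (if ε i then q else 1 - q)

/-- `dsel K = I_{:,K} (I_{:,K})ᵀ`, the 0/1 diagonal selection matrix of an index set. -/
def dsel {k : ℕ} (K : Finset (Fin k)) : Matrix (Fin k) (Fin k) ℝ :=
  Matrix.diagonal fun i => if i ∈ K then (1 : ℝ) else 0

/-- `diagPart M` keeps only the diagonal of the square matrix `M`. -/
def diagPart {k : ℕ} (M : Matrix (Fin k) (Fin k) ℝ) : Matrix (Fin k) (Fin k) ℝ :=
  Matrix.diagonal fun i => M i i

/-- Squared Euclidean norm. -/
def sqnorm {k : ℕ} (v : Fin k → ℝ) : ℝ := ∑ i, (v i) ^ 2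

/-- Squared Frobenius norm. -/
def frobSq {m n : ℕ} (A : Matrix (Fin m) (Fin n) ℝ) : ℝ := ∑ i, ∑ j, (A i j) ^ 2

/-- `P` is a partition of the index set into nonempty pairwise disjoint blocks. -/
def IsPartition {k s : ℕ} (P : Fin s → Finset (Fin k)) : Prop :=
  (∀ i : Fin k, ∃! a : Fin s, i ∈ P a) ∧ ∀ a : Fin s, (P a).Nonempty

/-!
Expanding the square coordinatewise and using that the two masks are independent, only the
first and second moments of the masked quantities enter. A masked sum `∑ⱼ δⱼ cⱼ` has mean
`p ∑ⱼ cⱼ` and second moment `p² (∑ⱼ cⱼ)² + p (1 - p) ∑ⱼ cⱼ²`, because `E[δⱼ δₖ]` is `p²` for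
`j ≠ k` but `p` for `j = k`; summed over the rows of `A`, that diagonal excess is
`xᵀ diag(AᵀA) x`.
-/

section ProductWeights

variable {ι κ : Type*} [Fintype ι] [DecidableEq ι] [Fintype κ] {w : κ → ℝ}

theorem sum_pi_prod_mul_prod_eq_prod_sum (hw : ∑ k, w k = 1) (s : Finset ι)
    (g : ι → κ → ℝ) :
    ∑ ε : ι → κ, (∏ i, w (ε i)) * ∏ i ∈ s, g i (ε i) = ∏ i ∈ s, ∑ k, w k * g i k := by
  have hs : ∀ ε : ι → κ, ∏ i ∈ s, g i (ε i) = ∏ i, if i ∈ s then g i (ε i) else 1 := by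
    intro ε
    rw [Finset.prod_ite_mem, Finset.univ_inter]
  simp_rw [hs, ← Finset.prod_mul_distrib]
  rw [← Fintype.prod_sum fun i k => w k * if i ∈ s then g i k else 1]
  simp_rw [mul_ite, mul_one, Finset.sum_ite_irrel, hw]
  rw [Finset.prod_ite_mem, Finset.univ_inter]

theorem sum_pi_prod_eq_one (hw : ∑ k, w k = 1) : ∑ ε : ι → κ, ∏ i, w (ε i) = 1 := by
  simpa using sum_pi_prod_mul_prod_eq_prod_sum hw ∅ (fun _ _ => (1 : ℝ))

theorem sum_pi_prod_mul_apply (hw : ∑ k, w k = 1) (i : ι) (h : κ → ℝ) :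
    ∑ ε : ι → κ, (∏ l, w (ε l)) * h (ε i) = ∑ k, w k * h k := by
  simpa using sum_pi_prod_mul_prod_eq_prod_sum hw {i} (fun _ => h)

theorem sum_pi_prod_mul_apply_mul_apply (hw : ∑ k, w k = 1) {i j : ι} (hij : i ≠ j)
    (g h : κ → ℝ) :
    ∑ ε : ι → κ, (∏ l, w (ε l)) * (g (ε i) * h (ε j)) =
      (∑ k, w k * g k) * ∑ k, w k * h k := by
  have := sum_pi_prod_mul_prod_eq_prod_sum hw {i, j} (fun l => if l = i then g else h)
  simpa [Finset.prod_pair hij, hij.symm] using this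

end ProductWeights

def bernoulliWeight (p : ℝ) (b : Bool) : ℝ := if b then p else 1 - p

theorem sum_bernoulliWeight (p : ℝ) : ∑ b, bernoulliWeight p b = 1 := by
  simp [bernoulliWeight]

theorem sum_bernoulliWeight_mul (p : ℝ) (h : Bool → ℝ) :
    ∑ b, bernoulliWeight p b * h b = p * h true + (1 - p) * h false := by
  simp [bernoulliWeight]

section VectorMask

variable {k : ℕ} (q : ℝ)

theorem wV_eq_prod (ε : Fin k → Bool) : wV q ε = ∏ i, bernoulliWeight q (ε i) := rfl

theorem sum_wV : ∑ ε : Fin k → Bool, wV q ε = 1 :=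
  sum_pi_prod_eq_one (sum_bernoulliWeight q)

theorem sum_wV_mul_maskV_apply (b : Fin k → ℝ) (i : Fin k) :
    ∑ ε, wV q ε * maskV ε b i = q * b i := by
  simp only [wV_eq_prod, maskV,
    sum_pi_prod_mul_apply (sum_bernoulliWeight q) i (fun e => if e then b i else 0),
    sum_bernoulliWeight_mul]
  simp

theorem sum_wV_mul_maskV_apply_mul_maskV_apply (b : Fin k → ℝ) (i j : Fin k) :
    ∑ ε, wV q ε * (maskV ε b i * maskV ε b j) =
      q ^ 2 * (b i * b j) + if i = j then (q - q ^ 2) * b i ^ 2 else 0 := by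
  simp only [wV_eq_prod, maskV]
  by_cases hij : i = j
  · subst hij
    rw [sum_pi_prod_mul_apply (sum_bernoulliWeight q) i
      (fun e => (if e then b i else 0) * (if e then b i else 0)), sum_bernoulliWeight_mul]
    simp
    ring
  · rw [sum_pi_prod_mul_apply_mul_apply (sum_bernoulliWeight q) hij
      (fun e => if e then b i else 0) (fun e => if e then b j else 0),
      sum_bernoulliWeight_mul, sum_bernoulliWeight_mul]
    simp [hij]
    ring

theorem sum_wV_mul_maskV_apply_sq (b : Fin k → ℝ) (i : Fin k) :
    ∑ ε, wV q ε * maskV ε b i ^ 2 = q * b i ^ 2 := by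
  simp only [wV_eq_prod, maskV,
    sum_pi_prod_mul_apply (sum_bernoulliWeight q) i (fun e => (if e then b i else 0) ^ 2),
    sum_bernoulliWeight_mul]
  simp

theorem sum_wV_mul_sum_maskV (c : Fin k → ℝ) :
    ∑ ε, wV q ε * ∑ j, maskV ε c j = q * ∑ j, c j := by
  simp_rw [Finset.mul_sum]
  rw [Finset.sum_comm]
  simp_rw [sum_wV_mul_maskV_apply]

theorem sum_wV_mul_sum_maskV_sq (c : Fin k → ℝ) :
    ∑ ε, wV q ε * (∑ j, maskV ε c j) ^ 2 =
      q ^ 2 * (∑ j, c j) ^ 2 + (q - q ^ 2) * ∑ j, c j ^ 2 := by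
  calc ∑ ε, wV q ε * (∑ j, maskV ε c j) ^ 2
      = ∑ j, ∑ l, ∑ ε, wV q ε * (maskV ε c j * maskV ε c l) := by
        simp_rw [sq, Finset.sum_mul_sum, Finset.mul_sum]
        rw [Finset.sum_comm]
        exact Finset.sum_congr rfl fun _ _ => Finset.sum_comm
    _ = ∑ j, ∑ l, (q ^ 2 * (c j * c l) + if j = l then (q - q ^ 2) * c j ^ 2 else 0) := by
        simp_rw [sum_wV_mul_maskV_apply_mul_maskV_apply]
    _ = q ^ 2 * (∑ j, c j) ^ 2 + (q - q ^ 2) * ∑ j, c j ^ 2 := by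
        rw [sq (∑ j, c j), Finset.sum_mul_sum]
        simp [Finset.sum_add_distrib, Finset.mul_sum]

end VectorMask

section MatrixMask

variable {m n : ℕ} (p : ℝ)

theorem wM_eq_prod_wV (δ : Fin m → Fin n → Bool) : wM p δ = ∏ i, wV p (δ i) := rfl

theorem sum_wM : ∑ δ : Fin m → Fin n → Bool, wM p δ = 1 :=
  sum_pi_prod_eq_one (sum_wV p)

theorem maskM_mulVec_apply (δ : Fin m → Fin n → Bool) (A : Matrix (Fin m) (Fin n) ℝ)
    (x : Fin n → ℝ) (i : Fin m) :
    (maskM δ A *ᵥ x) i = ∑ j, maskV (δ i) (fun j => A i j * x j) j := by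
  simp [maskM, maskV, Matrix.mulVec, dotProduct, ite_mul]

variable (A : Matrix (Fin m) (Fin n) ℝ) (x : Fin n → ℝ) (i : Fin m)

theorem sum_wM_mul_maskM_mulVec_apply :
    ∑ δ, wM p δ * (maskM δ A *ᵥ x) i = p * (A *ᵥ x) i := by
  simp only [wM_eq_prod_wV, maskM_mulVec_apply,
    sum_pi_prod_mul_apply (sum_wV p) i (fun r => ∑ j, maskV r (fun j => A i j * x j) j),
    sum_wV_mul_sum_maskV]
  rfl

theorem sum_wM_mul_maskM_mulVec_apply_sq :
    ∑ δ, wM p δ * (maskM δ A *ᵥ x) i ^ 2 =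
      p ^ 2 * (A *ᵥ x) i ^ 2 + (p - p ^ 2) * ∑ j, (A i j * x j) ^ 2 := by
  simp only [wM_eq_prod_wV, maskM_mulVec_apply,
    sum_pi_prod_mul_apply (sum_wV p) i (fun r => (∑ j, maskV r (fun j => A i j * x j) j) ^ 2),
    sum_wV_mul_sum_maskV_sq]
  rfl

end MatrixMask

theorem dotProduct_diagPart_transpose_mul_self_mulVec {m n : ℕ}
    (A : Matrix (Fin m) (Fin n) ℝ) (x : Fin n → ℝ) :
    x ⬝ᵥ (diagPart (Aᵀ * A) *ᵥ x) = ∑ i, ∑ j, (A i j * x j) ^ 2 := by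
  simp only [diagPart, dotProduct, Matrix.mulVec_diagonal, Matrix.mul_apply,
    Matrix.transpose_apply, Finset.mul_sum, Finset.sum_mul]
  rw [Finset.sum_comm]
  exact Finset.sum_congr rfl fun i _ => Finset.sum_congr rfl fun j _ => by ring

theorem sum_sum_mul_mul_sub_sq {Ω Ω' : Type*} [Fintype Ω] [Fintype Ω']
    {μ : Ω → ℝ} {ν : Ω' → ℝ} (hμ : ∑ ω, μ ω = 1) (hν : ∑ ω', ν ω' = 1)
    (f : Ω → ℝ) (g : Ω' → ℝ) :
    ∑ ω, ∑ ω', μ ω * ν ω' * (f ω - g ω') ^ 2 =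
      ∑ ω, μ ω * f ω ^ 2 - 2 * (∑ ω, μ ω * f ω) * (∑ ω', ν ω' * g ω')
        + ∑ ω', ν ω' * g ω' ^ 2 := by
  have hexp : ∀ ω ω', μ ω * ν ω' * (f ω - g ω') ^ 2 =
      μ ω * f ω ^ 2 * ν ω' - 2 * (μ ω * f ω * (ν ω' * g ω')) + μ ω * (ν ω' * g ω' ^ 2) :=
    fun _ _ => by ring
  simp only [hexp, Finset.sum_add_distrib, Finset.sum_sub_distrib, ← Finset.mul_sum, hν]
  simp only [← Finset.sum_mul, hμ]
  ring

theorem sum_sum_mul_mul_sqnorm_sub {Ω Ω' : Type*} [Fintype Ω] [Fintype Ω'] {k : ℕ}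
    {μ : Ω → ℝ} {ν : Ω' → ℝ} (hμ : ∑ ω, μ ω = 1) (hν : ∑ ω', ν ω' = 1)
    (f : Ω → Fin k → ℝ) (g : Ω' → Fin k → ℝ) :
    ∑ ω, ∑ ω', μ ω * ν ω' * sqnorm (f ω - g ω') =
      ∑ i, (∑ ω, μ ω * f ω i ^ 2 - 2 * (∑ ω, μ ω * f ω i) * (∑ ω', ν ω' * g ω' i)
        + ∑ ω', ν ω' * g ω' i ^ 2) := by
  calc _ = ∑ i, ∑ ω, ∑ ω', μ ω * ν ω' * (f ω i - g ω' i) ^ 2 := by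
        simp only [sqnorm, Pi.sub_apply, Finset.mul_sum]
        rw [Finset.sum_congr rfl fun ω _ => Finset.sum_comm, Finset.sum_comm]
    _ = _ := Finset.sum_congr rfl fun i _ => sum_sum_mul_mul_sub_sq hμ hν _ _

theorem stmt5_general {m n : ℕ} (A : Matrix (Fin m) (Fin n) ℝ) (b : Fin m → ℝ)
    (p q : ℝ) (hp0 : 0 < p) (hq0 : 0 < q)
    (x : Fin n → ℝ) :
    ∑ δ : Fin m → Fin n → Bool, ∑ ε : Fin m → Bool,
      (wM p δ * wV q ε) *
        sqnorm ((1 / p ^ 2) • (maskM δ A *ᵥ x) - (1 / (p * q)) • maskV ε b)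
      = (1 / p ^ 2) * sqnorm (A *ᵥ x - b)
        + ((1 - q) / (p ^ 2 * q)) * sqnorm b
        + ((1 - p) / p ^ 3) * (x ⬝ᵥ (diagPart (Aᵀ * A) *ᵥ x)) := by
  rw [sum_sum_mul_mul_sqnorm_sub (sum_wM p) (sum_wV q)]
  simp only [Pi.smul_apply, smul_eq_mul, mul_pow, mul_left_comm (wM p _),
    mul_left_comm (wV q _), ← Finset.mul_sum, sum_wM_mul_maskM_mulVec_apply_sq,
    sum_wM_mul_maskM_mulVec_apply, sum_wV_mul_maskV_apply, sum_wV_mul_maskV_apply_sq]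
  rw [dotProduct_diagPart_transpose_mul_self_mulVec, sqnorm, sqnorm, Finset.mul_sum,
    Finset.mul_sum, Finset.mul_sum, ← Finset.sum_add_distrib, ← Finset.sum_add_distrib]
  refine Finset.sum_congr rfl fun i _ => ?_
  simp only [Pi.sub_apply]
  field_simp
  ring

theorem stmt5 {m n : ℕ} (A : Matrix (Fin m) (Fin n) ℝ) (b : Fin m → ℝ)
    (p q : ℝ) (hp0 : 0 < p) (hp1 : p ≤ 1) (hq0 : 0 < q) (hq1 : q ≤ 1)
    (x : Fin n → ℝ) :
    ∑ δ : Fin m → Fin n → Bool, ∑ ε : Fin m → Bool,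
      (wM p δ * wV q ε) *
        sqnorm ((1 / p ^ 2) • (maskM δ A *ᵥ x) - (1 / (p * q)) • maskV ε b)
      = (1 / p ^ 2) * sqnorm (A *ᵥ x - b)
        + ((1 - q) / (p ^ 2 * q)) * sqnorm b
        + ((1 - p) / p ^ 3) * (x ⬝ᵥ (diagPart (Aᵀ * A) *ᵥ x)) :=
  stmt5_general A b p q hp0 hq0 x
end
end

section
/- Let A ∈ ℝ^{m×n}, b ∈ ℝ^m with b ∈ range(A) and A of full column rank, and suppose in Theorem (convergence of Algorithm 2) we take p = q = 1. Then the constant C in the error bound is zero, and hence for any constant step size 0 < α < σ_min²(A)/(st ρ), E[‖x^k − A†b‖₂²] ≤ (1 − 2ασ_min²(A)/(st) + 2α²ρ)^k ‖x^0 − A†b‖₂² → 0 as k → ∞; i.e., the iterates converge to the exact solution in mean square. -/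
open Matrix BigOperators Finset Filter

noncomputable section

lemma sqnorm_nonneg {k : ℕ} (v : Fin k → ℝ) : 0 ≤ sqnorm v :=
  Finset.sum_nonneg fun i _ => sq_nonneg _

lemma sqnorm_eq_zero {k : ℕ} {v : Fin k → ℝ} (h : sqnorm v = 0) : v = 0 := by
  funext i
  have := (Finset.sum_eq_zero_iff_of_nonneg (fun i _ => sq_nonneg (v i))).1 h i (mem_univ i)
  exact pow_eq_zero_iff two_ne_zero |>.1 this

lemma sqnorm_expand {k : ℕ} (v d : Fin k → ℝ) (c : ℝ) :
    sqnorm (v - c • d) = sqnorm v - 2 * c * (d ⬝ᵥ v) + c ^ 2 * sqnorm d := by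
  simp only [sqnorm, dotProduct, Pi.sub_apply, Pi.smul_apply, smul_eq_mul,
    Finset.mul_sum, ← Finset.sum_sub_distrib, ← Finset.sum_add_distrib]
  exact Finset.sum_congr rfl fun i _ => by ring

lemma sqnorm_dot {k : ℕ} (v : Fin k → ℝ) : sqnorm v = v ⬝ᵥ v := by
  simp [sqnorm, dotProduct, sq]

lemma dot_transpose {m k : ℕ} (A : Matrix (Fin m) (Fin k) ℝ) (u : Fin m → ℝ) (v : Fin k → ℝ) :
    (Aᵀ *ᵥ u) ⬝ᵥ v = u ⬝ᵥ (A *ᵥ v) := by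
  rw [Matrix.mulVec_transpose, ← Matrix.dotProduct_mulVec]

def snocEquiv (k : ℕ) (Ω : Type) : (Fin k → Ω) × Ω ≃ (Fin (k+1) → Ω) where
  toFun p := Fin.snoc p.1 p.2
  invFun f := (fun i => f i.castSucc, f (Fin.last k))
  left_inv p := by
    refine Prod.ext ?_ ?_
    · funext i; simp
    · simp
  right_inv f := by
    funext i
    refine Fin.lastCases ?_ ?_ i <;> simp

theorem stmt17 {m n s t : ℕ} (A : Matrix (Fin m) (Fin n) ℝ) (b : Fin m → ℝ)
    (σ ρ α : ℝ) (hσpos : 0 < σ)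
    (hσ : ∀ x : Fin n → ℝ, σ ^ 2 * sqnorm x ≤ sqnorm (A *ᵥ x))
    (hst : 0 < s * t)
    (hb : ∃ y : Fin n → ℝ, A *ᵥ y = b)
    (xstar : Fin n → ℝ) (hstar : Aᵀ *ᵥ (A *ᵥ xstar) = Aᵀ *ᵥ b)
    (Ω : Type) [Fintype Ω] (w : Ω → ℝ) (hw : ∀ ω, 0 ≤ w ω) (hw1 : ∑ ω, w ω = 1)
    (g : Ω → (Fin n → ℝ) → (Fin n → ℝ))
    (hunbiased : ∀ x, ∑ ω, w ω • g ω x = (1 / (s * t : ℝ)) • (Aᵀ *ᵥ (A *ᵥ x - b)))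
    (hρ : 0 < ρ)
    (hlip : ∀ x, ∑ ω, w ω * sqnorm (g ω x - g ω xstar) ≤ ρ * sqnorm (x - xstar))
    (hCbound : ∑ ω, w ω * sqnorm (g ω xstar)
      ≤ (2 * frobSq A * sqnorm (A *ᵥ xstar - b)) / (s * t : ℝ))
    (hα : 0 < α) (hα2 : α < σ ^ 2 / ((s * t : ℝ) * ρ))
    (X : (k : ℕ) → (Fin k → Ω) → (Fin n → ℝ)) (x0 : Fin n → ℝ)
    (hX0 : ∀ ω0 : Fin 0 → Ω, X 0 ω0 = x0)
    (hXstep : ∀ (k : ℕ) (ω : Fin (k + 1) → Ω),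
      X (k + 1) ω = X k (fun i => ω i.castSucc)
        - α • g (ω (Fin.last k)) (X k (fun i => ω i.castSucc))) :
    (∀ k : ℕ, ∑ ω : Fin k → Ω, (∏ i, w (ω i)) * sqnorm (X k ω - xstar)
        ≤ (1 - 2 * α * σ ^ 2 / (s * t : ℝ) + 2 * α ^ 2 * ρ) ^ k * sqnorm (x0 - xstar)) ∧
    Filter.Tendsto
      (fun k : ℕ => ∑ ω : Fin k → Ω, (∏ i, w (ω i)) * sqnorm (X k ω - xstar))
      Filter.atTop (nhds 0) := by
  have hstR : (0:ℝ) < (s * t : ℝ) := by exact_mod_cast hst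
  set r : ℝ := 1 - 2 * α * σ ^ 2 / (s * t : ℝ) + 2 * α ^ 2 * ρ with hr
  -- Step A : A xstar = b
  obtain ⟨y, hy⟩ := hb
  have hxy : A *ᵥ xstar = b := by
    have h0 : Aᵀ *ᵥ (A *ᵥ (xstar - y)) = 0 := by
      rw [Matrix.mulVec_sub, Matrix.mulVec_sub, hy, hstar]
      simp
    have h2 : sqnorm (A *ᵥ (xstar - y)) = 0 := by
      rw [sqnorm_dot, ← dot_transpose, h0, zero_dotProduct]
    have h4 : sqnorm (xstar - y) = 0 := by
      have h5 := hσ (xstar - y)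
      rw [h2] at h5
      have h6 : 0 < σ ^ 2 := pow_pos hσpos 2
      nlinarith [sqnorm_nonneg (xstar - y)]
    have : xstar = y := sub_eq_zero.mp (sqnorm_eq_zero h4)
    rw [this, hy]
  -- Step B : terms with g ω xstar vanish
  have hgstar : ∀ ω, w ω * sqnorm (g ω xstar) = 0 := by
    have hb0 : sqnorm (A *ᵥ xstar - b) = 0 := by
      rw [hxy]; simp [sqnorm]
    have hsum : ∑ ω, w ω * sqnorm (g ω xstar) ≤ 0 := by
      calc ∑ ω, w ω * sqnorm (g ω xstar)
          ≤ (2 * frobSq A * sqnorm (A *ᵥ xstar - b)) / (s * t : ℝ) := hCbound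
        _ = 0 := by rw [hb0]; simp
    intro ω
    exact (Finset.sum_eq_zero_iff_of_nonneg
      (fun ω _ => mul_nonneg (hw ω) (sqnorm_nonneg _))).1
      (le_antisymm hsum (Finset.sum_nonneg fun ω _ =>
        mul_nonneg (hw ω) (sqnorm_nonneg _))) ω (mem_univ ω)
  -- Step C : pointwise one-step bound
  have hpoint : ∀ x : Fin n → ℝ,
      ∑ ω, w ω * sqnorm (x - α • g ω x - xstar) ≤ r * sqnorm (x - xstar) := by
    intro x
    set v : Fin n → ℝ := x - xstar with hv
    have hrw : ∀ ω : Ω, x - α • g ω x - xstar = v - α • g ω x := fun ω => by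
      rw [hv]; abel
    have hmid : ∑ ω, w ω * (g ω x ⬝ᵥ v) = (1 / (s * t : ℝ)) * ((A *ᵥ v) ⬝ᵥ (A *ᵥ v)) := by
      have h1 : (∑ ω, w ω • g ω x) ⬝ᵥ v = ∑ ω, w ω * (g ω x ⬝ᵥ v) := by
        simp only [dotProduct, Finset.sum_apply, Pi.smul_apply, smul_eq_mul,
          Finset.sum_mul, Finset.mul_sum]
        rw [Finset.sum_comm]
        exact Finset.sum_congr rfl fun ω _ => Finset.sum_congr rfl fun i _ => by ring
      have hAb : A *ᵥ x - b = A *ᵥ v := by rw [hv, Matrix.mulVec_sub, hxy]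
      rw [← h1, hunbiased x, hAb, smul_dotProduct, smul_eq_mul, dot_transpose]
    have hquad : ∑ ω, w ω * sqnorm (g ω x) ≤ ρ * sqnorm v := by
      have heq : ∀ ω : Ω, w ω * sqnorm (g ω x) = w ω * sqnorm (g ω x - g ω xstar) := by
        intro ω
        rcases eq_or_ne (w ω) 0 with h | h
        · rw [h, zero_mul, zero_mul]
        · have hg0 : sqnorm (g ω xstar) = 0 := (mul_eq_zero.mp (hgstar ω)).resolve_left h
          rw [sqnorm_eq_zero hg0, sub_zero]
      rw [Finset.sum_congr rfl fun ω _ => heq ω]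
      exact hlip x
    calc ∑ ω, w ω * sqnorm (x - α • g ω x - xstar)
        = ∑ ω, (w ω * sqnorm v - 2 * α * (w ω * (g ω x ⬝ᵥ v))
            + α ^ 2 * (w ω * sqnorm (g ω x))) := by
          refine Finset.sum_congr rfl fun ω _ => ?_
          rw [hrw ω, sqnorm_expand]; ring
      _ = (∑ ω, w ω) * sqnorm v - 2 * α * (∑ ω, w ω * (g ω x ⬝ᵥ v))
            + α ^ 2 * ∑ ω, w ω * sqnorm (g ω x) := by
          rw [Finset.sum_add_distrib, Finset.sum_sub_distrib, ← Finset.sum_mul,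
            ← Finset.mul_sum, ← Finset.mul_sum]
      _ = sqnorm v - 2 * α * ((1 / (s * t : ℝ)) * ((A *ᵥ v) ⬝ᵥ (A *ᵥ v)))
            + α ^ 2 * ∑ ω, w ω * sqnorm (g ω x) := by rw [hw1, hmid, one_mul]
      _ ≤ sqnorm v - 2 * α * ((1 / (s * t : ℝ)) * (σ ^ 2 * sqnorm v))
            + α ^ 2 * (ρ * sqnorm v) := by
          have h1 : σ ^ 2 * sqnorm v ≤ (A *ᵥ v) ⬝ᵥ (A *ᵥ v) := by
            rw [← sqnorm_dot]; exact hσ v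
          gcongr
      _ ≤ r * sqnorm v := by
          have heq2 : r * sqnorm v
              = sqnorm v - 2 * α * ((1 / (s * t : ℝ)) * (σ ^ 2 * sqnorm v))
                + 2 * (α ^ 2 * (ρ * sqnorm v)) := by rw [hr]; ring
          have hpos : 0 ≤ α ^ 2 * (ρ * sqnorm v) :=
            mul_nonneg (sq_nonneg _) (mul_nonneg hρ.le (sqnorm_nonneg _))
          rw [heq2]; linarith
  rcases Nat.eq_zero_or_pos n with hn | hn
  · -- degenerate case n = 0
    subst hn
    have hz : ∀ (x : Fin 0 → ℝ), sqnorm x = 0 := fun x => by simp [sqnorm]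
    constructor
    · intro k
      simp [hz]
    · simp only [hz, mul_zero, Finset.sum_const_zero]
      exact tendsto_const_nhds
  · -- main case n ≥ 1
    have hr0 : 0 ≤ r := by
      set v1 : Fin n → ℝ := fun _ => 1 with hv1def
      have hv1 : 0 < sqnorm v1 := by
        have : sqnorm v1 = n := by simp [sqnorm, hv1def]
        rw [this]; exact_mod_cast hn
      have h := hpoint (xstar + v1)
      rw [add_sub_cancel_left] at h
      have h0 : 0 ≤ ∑ ω, w ω * sqnorm (xstar + v1 - α • g ω (xstar + v1) - xstar) :=
        Finset.sum_nonneg fun ω _ => mul_nonneg (hw ω) (sqnorm_nonneg _)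
      nlinarith
    have hr1 : r < 1 := by
      have h1 : α * ρ < σ ^ 2 / (s * t : ℝ) := by
        calc α * ρ < σ ^ 2 / ((s * t : ℝ) * ρ) * ρ := mul_lt_mul_of_pos_right hα2 hρ
          _ = σ ^ 2 / (s * t : ℝ) := by field_simp
      have h2 := mul_lt_mul_of_pos_left h1 (by positivity : (0:ℝ) < 2 * α)
      rw [hr]
      have : 2 * α * (α * ρ) = 2 * α ^ 2 * ρ := by ring
      rw [this] at h2
      have h3 : 2 * α * (σ ^ 2 / (s * t : ℝ)) = 2 * α * σ ^ 2 / (s * t : ℝ) := by ring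
      rw [h3] at h2
      linarith
    have hE0 : ∀ k : ℕ, 0 ≤ ∑ ω : Fin k → Ω, (∏ i, w (ω i)) * sqnorm (X k ω - xstar) :=
      fun k => Finset.sum_nonneg fun ω _ =>
        mul_nonneg (Finset.prod_nonneg fun i _ => hw _) (sqnorm_nonneg _)
    have hrec : ∀ k : ℕ,
        ∑ ω : Fin (k+1) → Ω, (∏ i, w (ω i)) * sqnorm (X (k+1) ω - xstar)
        ≤ r * ∑ ω : Fin k → Ω, (∏ i, w (ω i)) * sqnorm (X k ω - xstar) := by
      intro k
      have hre : ∑ ω : Fin (k+1) → Ω, (∏ i, w (ω i)) * sqnorm (X (k+1) ω - xstar)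
          = ∑ p : (Fin k → Ω) × Ω, ((∏ i, w (p.1 i)) * w p.2)
              * sqnorm (X k p.1 - α • g p.2 (X k p.1) - xstar) := by
        refine (Fintype.sum_equiv (snocEquiv k Ω)
          (fun p => ((∏ i, w (p.1 i)) * w p.2)
              * sqnorm (X k p.1 - α • g p.2 (X k p.1) - xstar))
          (fun ω => (∏ i, w (ω i)) * sqnorm (X (k+1) ω - xstar)) ?_).symm
        intro p
        simp only [snocEquiv, Equiv.coe_fn_mk]
        rw [hXstep k (Fin.snoc p.1 p.2), Fin.prod_univ_castSucc]
        simp [Fin.snoc_castSucc, Fin.snoc_last]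
      rw [hre, Fintype.sum_prod_type]
      calc ∑ f : Fin k → Ω, ∑ a : Ω, ((∏ i, w (f i)) * w a)
              * sqnorm (X k f - α • g a (X k f) - xstar)
          ≤ ∑ f : Fin k → Ω, (∏ i, w (f i)) * (r * sqnorm (X k f - xstar)) := by
            refine Finset.sum_le_sum fun f _ => ?_
            have h1 : ∑ a : Ω, ((∏ i, w (f i)) * w a)
                  * sqnorm (X k f - α • g a (X k f) - xstar)
                = (∏ i, w (f i)) * ∑ a : Ω, w a * sqnorm (X k f - α • g a (X k f) - xstar) := by
              rw [Finset.mul_sum]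
              exact Finset.sum_congr rfl fun a _ => by ring
            rw [h1]
            exact mul_le_mul_of_nonneg_left (hpoint (X k f))
              (Finset.prod_nonneg fun i _ => hw _)
        _ = r * ∑ ω : Fin k → Ω, (∏ i, w (ω i)) * sqnorm (X k ω - xstar) := by
            rw [Finset.mul_sum]
            exact Finset.sum_congr rfl fun f _ => by ring
    have hbound : ∀ k : ℕ, ∑ ω : Fin k → Ω, (∏ i, w (ω i)) * sqnorm (X k ω - xstar)
        ≤ r ^ k * sqnorm (x0 - xstar) := by
      intro k
      induction k with
      | zero =>
        have hconst : ∀ ω : Fin 0 → Ω, (∏ i, w (ω i)) * sqnorm (X 0 ω - xstar)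
            = sqnorm (x0 - xstar) := fun ω => by rw [hX0 ω]; simp
        rw [Finset.sum_congr rfl fun ω _ => hconst ω, Finset.sum_const]
        simp
      | succ k ih =>
        calc ∑ ω : Fin (k+1) → Ω, (∏ i, w (ω i)) * sqnorm (X (k+1) ω - xstar)
            ≤ r * ∑ ω : Fin k → Ω, (∏ i, w (ω i)) * sqnorm (X k ω - xstar) := hrec k
          _ ≤ r * (r ^ k * sqnorm (x0 - xstar)) := mul_le_mul_of_nonneg_left ih hr0
          _ = r ^ (k+1) * sqnorm (x0 - xstar) := by ring
    refine ⟨hbound, squeeze_zero hE0 hbound ?_⟩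
    have := (tendsto_pow_atTop_nhds_zero_of_lt_one hr0 hr1).mul_const (sqnorm (x0 - xstar))
    simpa using this
end
end
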